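/- In pdqsort's recursion, the first time a distinct value v is selected as a pivot, its predecessor (if it exists) is not equal to v. -/
import Mathlib


/-- A quicksort recursion tree over contiguous index intervals: a `node r l rgt`
partitions its interval around a pivot placed at position `r`. -/
inductive QTree where
  | leaf : QTree
  | node (r : ℕ) (l rgt : QTree) : QTree

namespace QTree

/-- Well-formedness over the interval `[lo, hi)`. -/
def WF : ℕ → ℕ → QTree → Prop
  | _, _, leaf => True
  | lo, hi, node r l rgt => lo ≤ r ∧ r < hi ∧ WF lo r l ∧ WF (r + 1) hi rgt

/-- `Sub lo hi t lo' hi' P t'` : in the tree `t` handling `[lo, hi)`, some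
recursive call handles `[lo', hi')` with subtree `t'`, and the set of pivot
positions of its strict ancestors is `P`. -/
inductive Sub : ℕ → ℕ → QTree → ℕ → ℕ → Set ℕ → QTree → Prop
  | refl (lo hi : ℕ) (t : QTree) : Sub lo hi t lo hi ∅ t
  | left {lo hi r lo' hi' P t'} {l rgt : QTree} :
      Sub lo r l lo' hi' P t' → Sub lo hi (node r l rgt) lo' hi' (insert r P) t'
  | right {lo hi r lo' hi' P t'} {l rgt : QTree} :
      Sub (r + 1) hi rgt lo' hi' P t' → Sub lo hi (node r l rgt) lo' hi' (insert r P) t'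

end QTree

theorem QTree.sub_pred_mem {lo hi lo' hi' : ℕ} {P : Set ℕ} {t t' : QTree}
    (h : QTree.Sub lo hi t lo' hi' P t') (hwf : QTree.WF lo hi t) :
    lo ≤ lo' ∧ (lo < lo' → lo' - 1 ∈ P) := by
  induction h with
  | refl => exact ⟨le_rfl, fun h => absurd h (lt_irrefl _)⟩
  | left _ ih =>
      obtain ⟨h1, h2, h3, h4⟩ := hwf
      exact ⟨(ih h3).1, fun h => Set.mem_insert_iff.mpr (Or.inr ((ih h3).2 h))⟩
  | right h ih =>
      obtain ⟨h1, h2, h3, h4⟩ := hwf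
      have := ih h4
      refine ⟨le_trans (le_trans h1 (Nat.le_succ _)) this.1, fun hlt => ?_⟩
      rcases lt_or_eq_of_le this.1 with hc | hc
      · exact Set.mem_insert_iff.mpr (Or.inr (this.2 hc))
      · rw [← hc]; simp

/-- Lemma 2 of the pdqsort paper: the first time a distinct value `v = a r` is
selected as a pivot (i.e. no ancestor pivot carries the value `v`), the
predecessor of its subsequence (if it exists) is not equal to `v`. -/
theorem first_pivot_ne_predecessor {α : Type*} [LinearOrder α] (a : ℕ → α)
    (n : ℕ) (t : QTree) (hwf : QTree.WF 0 n t)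
    (lo' hi' r : ℕ) (P : Set ℕ) (l rgt : QTree)
    (hsub : QTree.Sub 0 n t lo' hi' P (QTree.node r l rgt))
    (hfirst : ∀ j ∈ P, a j ≠ a r)
    (hpred : 0 < lo') :
    a (lo' - 1) ≠ a r := by
  exact hfirst _ ((QTree.sub_pred_mem hsub hwf).2 hpred)
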